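/- Let (X1, X2) be a doubly symmetric binary source with parameter p, and let A be a {0,1}-valued random variable such that X2 — X1 — A forms a Markov chain and P(A=1) = Γ. Then I(X1; A) + Γ·H(X1, X2 | A = 1, X1 ⊕ X2) + (1-Γ)·H(X1, X2 | A = 0) = Γ·H(X1, X2 | X1 ⊕ X2) + (1-Γ)·H(X1, X2). -/

import Mathlib

open Real Finset

/-- Shannon entropy (base 2) of a finite pmf given as a real-valued function. -/
noncomputable def ent {α : Type*} [Fintype α] (p : α → ℝ) : ℝ :=
  ∑ x, -(p x * Real.logb 2 (p x))

/-- Conditional entropy H(A | B) computed from a joint pmf on α × β (conditioning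
on the second coordinate), via the chain rule H(A|B) = H(A,B) - H(B). -/
noncomputable def condEnt {α β : Type*} [Fintype α] [Fintype β] (r : α × β → ℝ) : ℝ :=
  ent r - ent (fun b => ∑ a, r (a, b))

/-- Joint pmf of a doubly symmetric binary source with parameter p. -/
noncomputable def dsbs (p : ℝ) : Bool × Bool → ℝ :=
  fun x => if x.1 = x.2 then (1 - p) / 2 else p / 2

/-- Binary entropy function (base 2). -/
noncomputable def H2 (p : ℝ) : ℝ :=
  -(p * Real.logb 2 p) - ((1 - p) * Real.logb 2 (1 - p))

/-- Entropy (base 2) of a ternary distribution (p1, p2, p3). -/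
noncomputable def h3 (a b c : ℝ) : ℝ :=
  -(a * Real.logb 2 a) - (b * Real.logb 2 b) - (c * Real.logb 2 c)

/-- Joint pmf of ((X1, X2), X1 ⊕ X2) for a DSBS(p). -/
noncomputable def sumJoint (p : ℝ) : (Bool × Bool) × Bool → ℝ :=
  fun x => if x.2 = xor x.1.1 x.1.2 then dsbs p x.1 else 0

/-- Joint pmf of ((X1, X2), X1 · X2) (logical AND) for a DSBS(p). -/
noncomputable def andJoint (p : ℝ) : (Bool × Bool) × Bool → ℝ :=
  fun x => if x.2 = (x.1.1 && x.1.2) then dsbs p x.1 else 0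

/-- Mutual information I(A; B) from a joint pmf on a product of finite types. -/
noncomputable def mi {α β : Type*} [Fintype α] [Fintype β] (j : α × β → ℝ) : ℝ :=
  ent (fun a => ∑ b, j (a, b)) + ent (fun b => ∑ a, j (a, b)) - ent j

/-- Joint pmf of (X1, X2, A) when (X1,X2) ~ DSBS(p) and A is generated from X1
through the conditional pmf t (so that X2 — X1 — A is a Markov chain). -/
noncomputable def Jm (p : ℝ) (t : Bool → Bool → ℝ) (x1 x2 a : Bool) : ℝ :=
  dsbs p (x1, x2) * t x1 a

/-!
Write the joint pmf of `(X1, X2, A)` as `t(x1, a)/2 · P_N(x1 ⊕ x2)`. Rescaling a sub-pmf of mass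
`c` to a pmf changes `c · H` by `c log c`. Since `N = X1 ⊕ X2` is independent of `(X1, A)`,
`H(X1, X2 | A = 1, X1 ⊕ X2) = H(X1 | A = 1)` and `H(X1, X2 | A = 0) = H(X1 | A = 0) + H2(p)`.
With `I(X1; A) = H(X1) + H(A) - H(X1, A)`, the entropies of `A` and of `(X1, A)` cancel, and both
sides equal `1 + (1 - Γ) H2(p)`.
-/

noncomputable def bernPmf (p : ℝ) (b : Bool) : ℝ := if b then p else 1 - p

section Entropy

variable {α β : Type*} [Fintype α] [Fintype β]

lemma ent_prod_eq_sum_ent (f : α × β → ℝ) : ent f = ∑ b, ent (fun a => f (a, b)) :=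
  Fintype.sum_prod_type_right _

lemma ent_graph [DecidableEq β] (g : α → β) (f : α → ℝ) :
    ent (fun v : α × β => if v.2 = g v.1 then f v.1 else 0) = ent f := by
  rw [ent, Fintype.sum_prod_type]
  refine sum_congr rfl fun a _ => ?_
  simp

lemma sum_graph [DecidableEq β] (g : α → β) (f : α → ℝ) :
    ∑ v : α × β, (if v.2 = g v.1 then f v.1 else 0) = ∑ a, f a := by
  rw [Fintype.sum_prod_type]
  simp

lemma ent_const_mul (c : ℝ) {f : α → ℝ} (hf : ∑ a, f a = 1) :
    ent (fun a => c * f a) = c * ent f - c * logb 2 c := by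
  have hterm : ∀ a, -(c * f a * logb 2 (c * f a))
      = c * -(f a * logb 2 (f a)) - f a * (c * logb 2 c) := by
    intro a
    rcases eq_or_ne c 0 with rfl | hc; · simp
    rcases eq_or_ne (f a) 0 with hfa | hfa; · simp [hfa]
    rw [logb_mul hc hfa]; ring
  simp only [ent, hterm, sum_sub_distrib, ← mul_sum, ← sum_mul, hf, one_mul]

lemma mul_ent_div_of_sum_eq {f : α → ℝ} (hf : ∀ a, 0 ≤ f a) {c : ℝ} (hc : ∑ a, f a = c) :
    c * ent (fun a => f a / c) = ent f + c * logb 2 c := by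
  rcases eq_or_ne c 0 with rfl | hc0
  · have hf0 : f = 0 :=
      funext fun a => (sum_eq_zero_iff_of_nonneg fun a _ => hf a).1 hc a (mem_univ a)
    simp [hf0, ent]
  · have hsum : ∑ a, f a / c = 1 := by rw [← sum_div, hc, div_self hc0]
    have h := ent_const_mul c hsum
    simp only [mul_div_cancel₀ _ hc0] at h
    rw [h]; ring

lemma mul_condEnt_div_of_sum_eq {r : α × β → ℝ} (hr : ∀ v, 0 ≤ r v) {c : ℝ}
    (hc : ∑ v, r v = c) : c * condEnt (fun v => r v / c) = condEnt r := by
  have hmarg : ∑ b, ∑ a, r (a, b) = c := by rw [← Fintype.sum_prod_type_right, hc]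
  simp only [condEnt, ← sum_div, mul_sub]
  rw [mul_ent_div_of_sum_eq hr hc,
    mul_ent_div_of_sum_eq (fun b => sum_nonneg fun a _ => hr (a, b)) hmarg]
  ring

lemma ent_mul_of_sum_eq_one (g : α → ℝ) (w : α → β → ℝ) (hw : ∀ a, ∑ b, w a b = 1) :
    ent (fun v : α × β => g v.1 * w v.1 v.2) = ent g + ∑ a, g a * ent (w a) := by
  have hterm : ∀ a b, -(g a * w a b * logb 2 (g a * w a b))
      = -(g a * logb 2 (g a)) * w a b + g a * -(w a b * logb 2 (w a b)) := by
    intro a b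
    rcases eq_or_ne (g a) 0 with hg | hg; · simp [hg]
    rcases eq_or_ne (w a b) 0 with hwab | hwab; · simp [hwab]
    rw [logb_mul hg hwab]; ring
  simp only [ent, Fintype.sum_prod_type, hterm, sum_add_distrib, ← mul_sum, hw, mul_one]

end Entropy

lemma ent_bool_eq_H2 {f : Bool → ℝ} (h : f false = 1 - f true) : ent f = H2 (f true) := by
  simp only [ent, H2, Fintype.sum_bool, h]; ring

lemma H2_half : H2 (1 / 2) = 1 := by
  have h : logb 2 (1 / 2 : ℝ) = -1 := by
    rw [one_div, logb_inv, logb_self_eq_one one_lt_two]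
  rw [H2, show (1 : ℝ) - 1 / 2 = 1 / 2 by norm_num, h]; ring

lemma ent_uniform_bool : ent (fun _ : Bool => (1 : ℝ) / 2) = 1 := by
  rw [ent_bool_eq_H2 (by norm_num), H2_half]

section DSBS

variable (p : ℝ)

lemma ent_bernPmf_xor (x1 : Bool) : ent (fun x2 => bernPmf p (xor x1 x2)) = H2 p := by
  cases x1 <;> simp only [ent, H2, bernPmf, Fintype.sum_bool] <;> simp <;> ring

lemma sum_bernPmf : ∑ b, bernPmf p b = 1 := by simp [bernPmf]

lemma ent_bernPmf : ent (bernPmf p) = H2 p := by simp [ent, H2, bernPmf]; ring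

lemma sum_bernPmf_xor (x1 : Bool) : ∑ x2, bernPmf p (xor x1 x2) = 1 := by
  cases x1 <;> simp [bernPmf]

lemma dsbs_eq (x : Bool × Bool) : dsbs p x = 1 / 2 * bernPmf p (xor x.1 x.2) := by
  obtain ⟨_ | _, _ | _⟩ := x <;> simp [dsbs, bernPmf] <;> ring

lemma Jm_eq (t : Bool → Bool → ℝ) (x1 x2 a : Bool) :
    Jm p t x1 x2 a = t x1 a / 2 * bernPmf p (xor x1 x2) := by
  rw [Jm, dsbs_eq]; ring

lemma ent_mul_bernPmf_xor (g : Bool → ℝ) :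
    ent (fun x : Bool × Bool => g x.1 * bernPmf p (xor x.1 x.2))
      = ent g + (∑ x1, g x1) * H2 p := by
  rw [ent_mul_of_sum_eq_one g _ (sum_bernPmf_xor p)]
  simp only [ent_bernPmf_xor, sum_mul]

lemma sum_ite_xor_mul_bernPmf (g : Bool → ℝ) (s : Bool) :
    ∑ x : Bool × Bool, (if s = xor x.1 x.2 then g x.1 * bernPmf p (xor x.1 x.2) else 0)
      = (∑ x1, g x1) * bernPmf p s := by
  cases s <;> simp [Fintype.sum_prod_type] <;> ring

/-- Crypto lemma: `X1 ⊕ X2 = N` is independent of `X1`, so conditioning on it leaves `H(X1)`;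
unnormalized weights `g` add the term `(∑ g) log (∑ g)`. -/
lemma condEnt_xor (g : Bool → ℝ) :
    condEnt (fun v : (Bool × Bool) × Bool =>
        if v.2 = xor v.1.1 v.1.2 then g v.1.1 * bernPmf p (xor v.1.1 v.1.2) else 0)
      = ent g + (∑ x1, g x1) * logb 2 (∑ x1, g x1) := by
  rw [condEnt, ent_graph (fun x : Bool × Bool => xor x.1 x.2)
      (fun x => g x.1 * bernPmf p (xor x.1 x.2)), ent_mul_bernPmf_xor]
  simp only [sum_ite_xor_mul_bernPmf]
  rw [ent_const_mul _ (sum_bernPmf p), ent_bernPmf]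
  ring

lemma ent_dsbs : ent (dsbs p) = 1 + H2 p := by
  have h := ent_mul_bernPmf_xor p (fun _ => 1 / 2)
  simp only [← dsbs_eq, ent_uniform_bool] at h
  rw [h]; norm_num

lemma condEnt_sumJoint : condEnt (sumJoint p) = 1 := by
  have h := condEnt_xor p (fun _ => 1 / 2)
  simp only [← dsbs_eq, ent_uniform_bool] at h
  unfold sumJoint
  rw [h]; norm_num

end DSBS

section Channel

variable {p : ℝ} {t : Bool → Bool → ℝ}

lemma sum_Jm_right (x1 a : Bool) : ∑ x2, Jm p t x1 x2 a = t x1 a / 2 := by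
  simp only [Jm_eq, ← mul_sum, sum_bernPmf_xor, mul_one]

lemma Jm_nonneg (hp : p ∈ Set.Icc (0 : ℝ) 1) (ht0 : ∀ x a, 0 ≤ t x a) (x1 x2 a : Bool) :
    0 ≤ Jm p t x1 x2 a :=
  mul_nonneg (by unfold dsbs; split_ifs <;> linarith [hp.1, hp.2]) (ht0 x1 a)

lemma sum_div_two_false (ht1 : ∀ x, ∑ a, t x a = 1) :
    ∑ x, t x false / 2 = 1 - ∑ x, t x true / 2 := by
  simp only [Fintype.sum_bool] at ht1 ⊢
  linarith [ht1 true, ht1 false]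

lemma mi_half_mul_kernel (ht1 : ∀ x, ∑ a, t x a = 1) :
    mi (fun v : Bool × Bool => t v.1 v.2 / 2)
      = 1 + H2 (∑ x, t x true / 2) - ∑ a, ent (fun x => t x a / 2) := by
  have hX1 : ∀ x, ∑ a, t x a / 2 = 1 / 2 := fun x => by rw [← sum_div, ht1]
  simp only [mi, hX1, ent_uniform_bool]
  rw [ent_bool_eq_H2 (sum_div_two_false ht1),
    ent_prod_eq_sum_ent (fun v : Bool × Bool => t v.1 v.2 / 2)]

lemma mul_condEnt_xor_Jm_div (hp : p ∈ Set.Icc (0 : ℝ) 1) (ht0 : ∀ x a, 0 ≤ t x a)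
    {a : Bool} {c : ℝ} (hc : ∑ x, t x a / 2 = c) :
    c * condEnt (fun v : (Bool × Bool) × Bool =>
        (if v.2 = xor v.1.1 v.1.2 then Jm p t v.1.1 v.1.2 a else 0) / c)
      = ent (fun x => t x a / 2) + c * logb 2 c := by
  have hsum : ∑ v : (Bool × Bool) × Bool,
      (if v.2 = xor v.1.1 v.1.2 then Jm p t v.1.1 v.1.2 a else 0) = c := by
    rw [sum_graph (fun x : Bool × Bool => xor x.1 x.2) (fun x => Jm p t x.1 x.2 a),
      Fintype.sum_prod_type]
    simp only [sum_Jm_right, hc]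
  rw [mul_condEnt_div_of_sum_eq
    (fun v => by split_ifs <;> simp [Jm_nonneg hp ht0]) hsum]
  simp only [Jm_eq]
  simpa only [hc] using condEnt_xor p (fun x => t x a / 2)

lemma mul_ent_Jm_div (hp : p ∈ Set.Icc (0 : ℝ) 1) (ht0 : ∀ x a, 0 ≤ t x a)
    {a : Bool} {c : ℝ} (hc : ∑ x, t x a / 2 = c) :
    c * ent (fun x : Bool × Bool => Jm p t x.1 x.2 a / c)
      = ent (fun x => t x a / 2) + c * H2 p + c * logb 2 c := by
  have hsum : ∑ x : Bool × Bool, Jm p t x.1 x.2 a = c := by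
    simp only [Fintype.sum_prod_type, sum_Jm_right, hc]
  have h := ent_mul_bernPmf_xor p (fun x => t x a / 2)
  simp only [hc] at h
  rw [mul_ent_div_of_sum_eq (fun x => Jm_nonneg hp ht0 _ _ _) hsum]
  simp only [Jm_eq, h]

end Channel

/-- Greedy actions are optimal with sum side information: for a DSBS(p) and a binary
action A with X2 — X1 — A Markov and P(A = 1) = Γ,
I(X1;A) + Γ·H(X1,X2 | A=1, X1⊕X2) + (1-Γ)·H(X1,X2 | A=0)
  = Γ·H(X1,X2 | X1⊕X2) + (1-Γ)·H(X1,X2). -/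
theorem greedy_optimal_sum_side_info (p : ℝ) (hp : p ∈ Set.Icc (0 : ℝ) 1)
    (t : Bool → Bool → ℝ) (ht0 : ∀ x a, 0 ≤ t x a) (ht1 : ∀ x, ∑ a, t x a = 1)
    (Γ : ℝ) (hΓ : Γ = ∑ x1, ∑ x2, Jm p t x1 x2 true) :
    mi (fun v : Bool × Bool => ∑ x2, Jm p t v.1 x2 v.2)
      + Γ * condEnt (fun v : (Bool × Bool) × Bool =>
          (if v.2 = xor v.1.1 v.1.2 then Jm p t v.1.1 v.1.2 true else 0) / Γ)
      + (1 - Γ) * ent (fun x : Bool × Bool => Jm p t x.1 x.2 false / (1 - Γ))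
    = Γ * condEnt (sumJoint p) + (1 - Γ) * ent (dsbs p) := by
  have hA1 : ∑ x, t x true / 2 = Γ := by simp only [hΓ, sum_Jm_right]
  have hA0 : ∑ x, t x false / 2 = 1 - Γ := by rw [sum_div_two_false ht1, hA1]
  simp only [sum_Jm_right]
  rw [mi_half_mul_kernel ht1, mul_condEnt_xor_Jm_div hp ht0 hA1, mul_ent_Jm_div hp ht0 hA0,
    condEnt_sumJoint, ent_dsbs, hA1, Fintype.sum_bool, H2]
  ring
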